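/- Let λ ≠ 0, let x, x̃ : ℤ/Nℤ → ℝ with x̃_k−x_k−λ ≠ 0 and x_k−x̃_{k−1}−λ ≠ 0 for all k, and define q : ℤ/Nℤ → ℝ by q_k = ((x̃_k−x_k+λ)/(x̃_k−x_k−λ))·((x_k−x̃_{k−1}+λ)/(x_k−x̃_{k−1}−λ)). Then the monodromy matrix T = L_{N−1}·L_{N−2}·⋯·L_1·L_0 satisfies T · (x̃_{−1}, 1)ᵀ = (∏_{k∈ℤ/Nℤ} 2λ·(x̃_{k−1}−x_k−λ)/(x̃_k−x_k−λ)) · (x̃_{−1}, 1)ᵀ; in particular, (2λ)^N·∏_{k∈ℤ/Nℤ}(x̃_{k−1}−x_k−λ)/(x̃_k−x_k−λ) is an eigenvalue of T. -/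

import Mathlib

/-- Transition matrix of the zero curvature representation of the Bäcklund
transformation for the symmetric rational multiplicative Toda-type system
(with `q_k = e^{2p_k}`). -/
noncomputable def ratMultTodaL (N : ℕ) (lam : ℝ) (x q : ZMod N → ℝ) (i : ℕ) :
    Matrix (Fin 2) (Fin 2) ℝ :=
  !![lam * (q (i : ZMod N) + 1) + x (i : ZMod N) * (q (i : ZMod N) - 1),
       (lam ^ 2 - x (i : ZMod N) ^ 2) * (q (i : ZMod N) - 1);
     q (i : ZMod N) - 1,
       lam * (q (i : ZMod N) + 1) - x (i : ZMod N) * (q (i : ZMod N) - 1)]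

/-- Monodromy matrix `T = L_{N-1} ⬝ ⋯ ⬝ L_1 ⬝ L_0`. -/
noncomputable def ratMultTodaT (N : ℕ) (lam : ℝ) (x q : ZMod N → ℝ) :
    Matrix (Fin 2) (Fin 2) ℝ :=
  ((List.range N).reverse.map (ratMultTodaL N lam x q)).prod

/-!
The Bäcklund transformation gives a gauge equivalence along the chain: each transition matrix
`L_k` carries the vector `(x̃_{k-1}, 1)` to a multiple of `(x̃_k, 1)`. Composing these maps around
the period, `(x̃_{-1}, 1)` returns to a multiple of itself, the factor being the product of the
local multipliers.
-/

open Finset Matrix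

theorem Matrix.mulVec_prod_range_reverse {n R : Type*} [Fintype n] [DecidableEq n]
    [CommSemiring R]
    (M : ℕ → Matrix n n R) (v : ℕ → n → R) (c : ℕ → R)
    (h : ∀ i, M i *ᵥ v i = c i • v (i + 1)) (m : ℕ) :
    ((List.range m).reverse.map M).prod *ᵥ v 0 = (∏ i ∈ range m, c i) • v m := by
  induction m with
  | zero => simp
  | succ m ih =>
    rw [List.range_succ, List.reverse_append, List.map_append, List.prod_append,
      ← mulVec_mulVec, ih, mulVec_smul, List.reverse_singleton, List.map_singleton,
      List.prod_singleton, h, smul_smul, prod_range_succ, mul_comm]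

theorem Matrix.hasEigenvalue_toLin' {n R : Type*} [Fintype n] [DecidableEq n] [CommRing R]
    {A : Matrix n n R} {v : n → R} {μ : R} (hv : v ≠ 0) (h : A *ᵥ v = μ • v) :
    Module.End.HasEigenvalue (toLin' A) μ :=
  Module.End.hasEigenvalue_of_hasEigenvector
    ⟨by rwa [Module.End.mem_eigenspace_iff, toLin'_apply], hv⟩

theorem ZMod.prod_range_natCast {M : Type*} [CommMonoid M] (N : ℕ) [NeZero N] (f : ZMod N → M) :
    ∏ i ∈ range N, f i = ∏ k : ZMod N, f k :=
  prod_nbij' (fun i => (i : ZMod N)) ZMod.val (fun _ _ => mem_univ _)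
    (fun k _ => mem_range.mpr k.val_lt)
    (fun _ hi => ZMod.val_natCast_of_lt (mem_range.mp hi))
    (fun k _ => ZMod.natCast_zmod_val k) (fun _ _ => rfl)

/-- Here `a = x̃_{k-1}`, `x = x_k`, `b = x̃_k`, and `q = q_k` is the momentum variable that
the Bäcklund transformation assigns to them. -/
theorem backlund_transitionMatrix_mulVec {K : Type*} [Field K] {lam x a b q : K} (hb : b - x - lam ≠ 0)
    (ha : x - a - lam ≠ 0)
    (hq : q = ((b - x + lam) / (b - x - lam)) * ((x - a + lam) / (x - a - lam))) :
    !![lam * (q + 1) + x * (q - 1), (lam ^ 2 - x ^ 2) * (q - 1);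
        q - 1, lam * (q + 1) - x * (q - 1)] *ᵥ ![a, 1] =
      (2 * lam * (a - x - lam) / (b - x - lam)) • ![b, 1] := by
  subst hq
  ext j
  fin_cases j <;> simp [mulVec, dotProduct] <;> field_simp <;> ring

theorem ratMultTodaL_mulVec (N : ℕ) (lam : ℝ) (x xt q : ZMod N → ℝ)
    (hx1 : ∀ k : ZMod N, xt k - x k - lam ≠ 0)
    (hx2 : ∀ k : ZMod N, x k - xt (k - 1) - lam ≠ 0)
    (hq : ∀ k : ZMod N,
      q k = ((xt k - x k + lam) / (xt k - x k - lam)) *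
        ((x k - xt (k - 1) + lam) / (x k - xt (k - 1) - lam)))
    (i : ℕ) :
    ratMultTodaL N lam x q i *ᵥ ![xt ((i : ZMod N) - 1), 1] =
      (2 * lam * (xt ((i : ZMod N) - 1) - x i - lam) / (xt i - x i - lam)) •
        ![xt ((i + 1 : ℕ) - 1 : ZMod N), 1] := by
  rw [Nat.cast_succ, add_sub_cancel_right]
  exact backlund_transitionMatrix_mulVec (hx1 i) (hx2 i) (hq i)

theorem ratMultToda_monodromy_eigenvalue_general
    (N : ℕ) [NeZero N] (lam : ℝ) (x xt q : ZMod N → ℝ)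
    (hx1 : ∀ k : ZMod N, xt k - x k - lam ≠ 0)
    (hx2 : ∀ k : ZMod N, x k - xt (k - 1) - lam ≠ 0)
    (hq : ∀ k : ZMod N,
      q k = ((xt k - x k + lam) / (xt k - x k - lam)) *
        ((x k - xt (k - 1) + lam) / (x k - xt (k - 1) - lam))) :
    (ratMultTodaT N lam x q).mulVec ![xt (-1), 1] =
      (∏ k : ZMod N, 2 * lam * (xt (k - 1) - x k - lam) / (xt k - x k - lam)) •
        ![xt (-1), 1] ∧
    Module.End.HasEigenvalue (Matrix.toLin' (ratMultTodaT N lam x q))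
      ((2 * lam) ^ N * ∏ k : ZMod N, (xt (k - 1) - x k - lam) / (xt k - x k - lam)) := by
  have hT : ratMultTodaT N lam x q *ᵥ ![xt (-1), 1] =
      (∏ k : ZMod N, 2 * lam * (xt (k - 1) - x k - lam) / (xt k - x k - lam)) •
        ![xt (-1), 1] := by
    have := mulVec_prod_range_reverse (ratMultTodaL N lam x q)
      (fun i => ![xt ((i : ZMod N) - 1), 1]) _ (ratMultTodaL_mulVec N lam x xt q hx1 hx2 hq) N
    rw [ZMod.prod_range_natCast N
      (fun k => 2 * lam * (xt (k - 1) - x k - lam) / (xt k - x k - lam))] at this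
    simpa only [ratMultTodaT, Nat.cast_zero, ZMod.natCast_self, zero_sub] using this
  have hfactor : ∏ k : ZMod N, 2 * lam * (xt (k - 1) - x k - lam) / (xt k - x k - lam) =
      (2 * lam) ^ N * ∏ k : ZMod N, (xt (k - 1) - x k - lam) / (xt k - x k - lam) := by
    simp_rw [mul_div_assoc]
    rw [prod_mul_distrib, prod_const, card_univ, ZMod.card]
  have hv : (![xt (-1), 1] : Fin 2 → ℝ) ≠ 0 := fun h => one_ne_zero (congrFun h 1)
  exact ⟨hT, hasEigenvalue_toLin' hv (hfactor ▸ hT)⟩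

/-- For the periodic symmetric rational multiplicative Toda-type
system, `(2λ)^N ∏ (x̃_{k−1} − x_k − λ)/(x̃_k − x_k − λ)` is an eigenvalue of
the monodromy matrix, with eigenvector `(x̃_{−1}, 1)ᵀ`. -/
theorem ratMultToda_monodromy_eigenvalue
    (N : ℕ) [NeZero N] (lam : ℝ) (hlam : lam ≠ 0) (x xt q : ZMod N → ℝ)
    (hx1 : ∀ k : ZMod N, xt k - x k - lam ≠ 0)
    (hx2 : ∀ k : ZMod N, x k - xt (k - 1) - lam ≠ 0)
    (hq : ∀ k : ZMod N,
      q k = ((xt k - x k + lam) / (xt k - x k - lam)) *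
        ((x k - xt (k - 1) + lam) / (x k - xt (k - 1) - lam))) :
    (ratMultTodaT N lam x q).mulVec ![xt (-1), 1] =
      (∏ k : ZMod N, 2 * lam * (xt (k - 1) - x k - lam) / (xt k - x k - lam)) •
        ![xt (-1), 1] ∧
    Module.End.HasEigenvalue (Matrix.toLin' (ratMultTodaT N lam x q))
      ((2 * lam) ^ N * ∏ k : ZMod N, (xt (k - 1) - x k - lam) / (xt k - x k - lam)) :=
  ratMultToda_monodromy_eigenvalue_general N lam x xt q hx1 hx2 hq
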